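/- arXiv:2011.11359 — 2 statements merged into one kernel-verified Lean document; each statement's English description precedes it below -/
import Mathlib

section
/- Let $A$ be a linear operator on a Banach space $X$, $L : D(L) \subset X \to Y$ a surjective linear boundary operator with $D(A) \subset D(L)$, and let $A_0 = A|_{\ker L}$. Suppose $\lambda \in \rho(A_0)$ (the resolvent set of $A_0$). Then $D(A) = D(A_0) \oplus \ker(\lambda - A)$, i.e., every $u \in D(A)$ decomposes uniquely as $u = u_0 + u_1$ with $u_0 \in D(A_0)$ and $u_1 \in \ker(\lambda - A)$, and the restriction $L|_{\ker(\lambda - A)} : \ker(\lambda - A) \to Y$ is a bijection onto $Y$. -/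
/-!
Bijectivity of `λ - A` on `ker L` says exactly that `ker L` is a complement of `ker (λ - A)`
in `D(A)`; and any complement of `ker L` is mapped isomorphically by `L` onto its range.
-/

namespace LinearMap

variable {R M N : Type*} [Ring R] [AddCommGroup M] [Module R M] [AddCommGroup N] [Module R N]

theorem isCompl_ker_of_bijective_domRestrict {f : M →ₗ[R] N} {S : Submodule R M}
    (hf : Function.Bijective (f.domRestrict S)) : IsCompl S (ker f) := by
  have hsurj : Function.Surjective f := Function.Surjective.of_comp hf.surjective
  exact ⟨injective_domRestrict_iff.mp hf.injective,
    (surjective_domRestrict_iff hsurj).mp hf.surjective⟩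

theorem bijective_domRestrict_of_isCompl {f : M →ₗ[R] N} {S : Submodule R M}
    (hf : Function.Surjective f) (hS : IsCompl (ker f) S) :
    Function.Bijective (f.domRestrict S) :=
  ⟨injective_domRestrict_iff.mpr hS.disjoint.symm,
    (surjective_domRestrict_iff hf).mpr hS.codisjoint.symm⟩

end LinearMap

/-- **Greiner's decomposition lemma.**  Let `A : D(A) ⊆ X → X` be a linear operator,
`L : D(A) → Y` a surjective linear boundary operator, and `A₀ = A|_{ker L}`.  If
`λ ∈ ρ(A₀)`, i.e. `λ - A₀ : ker L → X` is bijective, then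
`D(A) = D(A₀) ⊕ ker(λ - A)` and `L` restricts to a bijection of `ker(λ - A)` onto `Y`. -/
theorem greiner_decomposition
    (X Y : Type*) [NormedAddCommGroup X] [NormedSpace ℝ X]
    [AddCommGroup Y] [Module ℝ Y]
    (dom : Submodule ℝ X) (A : dom →ₗ[ℝ] X) (L : dom →ₗ[ℝ] Y)
    (hLsurj : Function.Surjective L)
    (lam : ℝ)
    (hres : Function.Bijective fun u : LinearMap.ker L =>
      (lam • dom.subtype - A) (u : dom)) :
    (∀ u : dom, ∃! p : (LinearMap.ker L) × (LinearMap.ker (lam • dom.subtype - A)),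
        u = (p.1 : dom) + (p.2 : dom)) ∧
    Function.Bijective fun v : LinearMap.ker (lam • dom.subtype - A) => L (v : dom) := by
  have hcompl := LinearMap.isCompl_ker_of_bijective_domRestrict
    (f := lam • dom.subtype - A) (S := LinearMap.ker L) hres
  refine ⟨fun u ↦ ?_, LinearMap.bijective_domRestrict_of_isCompl hLsurj hcompl⟩
  simpa only [eq_comm] using Submodule.existsUnique_add_of_isCompl_prod hcompl u
end

section
/- Let $f : \mathbb{R} \to \mathbb{R}$, $f(\eta) = -a \eta^{2k+1} + \sum_{l=0}^{2k} a_l \eta^l$ be a polynomial of odd degree $2k+1$ with leading coefficient $-a$ where $a \geq c > 0$ and $|a_l| \leq C$ for all $l$. Then there exist constants $a'', b'' > 0$ depending only on $c, C, k$ such that for all $u, v \in \mathbb{R}$: $(f(u+v) - f(v)) \cdot \mathrm{sgn}(u) \leq a''(1 + |v|)^{2k+1} - b'' |u|^{2k+1}$. -/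
/-!
Write `n = 2k + 1` and split `f(u+v) - f(v)` into the leading part `-a((u+v)^n - v^n)` and a
lower-order remainder. Since `t ↦ t^n` is increasing, `sgn(u)((u+v)^n - v^n)` is nonnegative and in
fact at least `(|u|/2)^n - |v|^n`, so the leading part contributes at most
`c|v|^n - c(|u|/2)^n = c|v|^n - 2δ|u|^n` with `δ = c/2^(n+1)`. The remainder is
`O((1+|v|+|u|)^(n-1))`; by Young's inequality and `(p+q)^n ≤ 2^(n-1)(p^n+q^n)` it is at most
`δ((1+|v|)^n + |u|^n)` plus a constant, which absorbs half of the good term.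
-/

open Finset

lemma mul_sign_le_abs (x u : ℝ) : x * Real.sign u ≤ |x| := by
  rcases Real.sign_apply_eq u with h | h | h <;> simp [h, neg_le_abs, le_abs_self]

namespace Odd

variable {n : ℕ}

lemma half_pow_sub_abs_pow_le_add_pow_sub_pow (hn : Odd n) {u : ℝ} (hu : 0 ≤ u) (v : ℝ) :
    (u / 2) ^ n - |v| ^ n ≤ (u + v) ^ n - v ^ n := by
  have hmono := hn.strictMono_pow (R := ℝ) |>.monotone
  rcases le_or_gt (u / 2) |v| with hsmall | hlarge
  · have h₁ : (u / 2) ^ n ≤ |v| ^ n := pow_le_pow_left₀ (by positivity) hsmall n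
    have h₂ : v ^ n ≤ (u + v) ^ n := hmono (by linarith)
    linarith
  · have h₁ : (u / 2) ^ n ≤ (u + v) ^ n :=
      pow_le_pow_left₀ (by positivity) (by linarith [neg_le_abs v]) n
    have h₂ : v ^ n ≤ |v| ^ n := hmono (le_abs_self v)
    linarith

lemma half_abs_pow_sub_abs_pow_le_sign_mul (hn : Odd n) (u v : ℝ) :
    (|u| / 2) ^ n - |v| ^ n ≤ Real.sign u * ((u + v) ^ n - v ^ n) := by
  rcases lt_trichotomy u 0 with hu | rfl | hu
  · have h := hn.half_pow_sub_abs_pow_le_add_pow_sub_pow (neg_nonneg.2 hu.le) (-v)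
    rw [abs_neg, show -u + -v = -(u + v) by ring, hn.neg_pow, hn.neg_pow] at h
    rw [Real.sign_of_neg hu, abs_of_neg hu]
    linarith
  · simp [hn.pos.ne']
  · rw [Real.sign_of_pos hu, abs_of_pos hu, one_mul]
    exact hn.half_pow_sub_abs_pow_le_add_pow_sub_pow hu.le v

lemma sign_mul_add_pow_sub_pow_nonneg (hn : Odd n) (u v : ℝ) :
    0 ≤ Real.sign u * ((u + v) ^ n - v ^ n) := by
  have hmono := hn.strictMono_pow (R := ℝ) |>.monotone
  rcases lt_trichotomy u 0 with hu | rfl | hu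
  · have : (u + v) ^ n ≤ v ^ n := hmono (by linarith)
    rw [Real.sign_of_neg hu]
    linarith
  · simp
  · have : v ^ n ≤ (u + v) ^ n := hmono (by linarith)
    rw [Real.sign_of_pos hu]
    linarith

lemma neg_mul_add_pow_sub_pow_mul_sign_le (hn : Odd n) {a c : ℝ} (hc : 0 ≤ c) (hca : c ≤ a)
    (u v : ℝ) :
    -a * ((u + v) ^ n - v ^ n) * Real.sign u ≤ c * |v| ^ n - c * (|u| / 2) ^ n := by
  have hpos := hn.sign_mul_add_pow_sub_pow_nonneg u v
  calc -a * ((u + v) ^ n - v ^ n) * Real.sign u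
      = -(a * (Real.sign u * ((u + v) ^ n - v ^ n))) := by ring
    _ ≤ -(c * (Real.sign u * ((u + v) ^ n - v ^ n))) := by
      gcongr
    _ ≤ -(c * ((|u| / 2) ^ n - |v| ^ n)) := by
      gcongr
      exact hn.half_abs_pow_sub_abs_pow_le_sign_mul u v
    _ = c * |v| ^ n - c * (|u| / 2) ^ n := by ring

end Odd

lemma abs_add_pow_sub_pow_le {l m : ℕ} (hl : l ≤ m) (u v : ℝ) :
    |(u + v) ^ l - v ^ l| ≤ 2 * (1 + |v| + |u|) ^ m := by
  have hbound : ∀ w : ℝ, |w| ≤ 1 + |v| + |u| → |w ^ l| ≤ (1 + |v| + |u|) ^ m := fun w hw => by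
    rw [abs_pow]
    exact (pow_le_pow_left₀ (abs_nonneg w) hw l).trans
      (pow_le_pow_right₀ (by linarith [abs_nonneg u, abs_nonneg v]) hl)
  have h₁ := hbound (u + v) (by linarith [abs_add_le u v])
  have h₂ := hbound v (by linarith [abs_nonneg u])
  linarith [abs_sub ((u + v) ^ l) (v ^ l)]

lemma abs_sum_mul_add_pow_sub_sum_mul_pow_le {m : ℕ} {C : ℝ} {co : ℕ → ℝ}
    (hco : ∀ l ≤ m, |co l| ≤ C) (u v : ℝ) :
    |∑ l ∈ range (m + 1), co l * (u + v) ^ l - ∑ l ∈ range (m + 1), co l * v ^ l|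
      ≤ (m + 1) * (2 * C) * (1 + |v| + |u|) ^ m := by
  have hC : 0 ≤ C := (abs_nonneg _).trans (hco 0 m.zero_le)
  rw [← sum_sub_distrib]
  calc |∑ l ∈ range (m + 1), (co l * (u + v) ^ l - co l * v ^ l)|
      ≤ ∑ l ∈ range (m + 1), |co l * (u + v) ^ l - co l * v ^ l| := abs_sum_le_sum_abs _ _
    _ ≤ #(range (m + 1)) • (C * (2 * (1 + |v| + |u|) ^ m)) := by
      refine sum_le_card_nsmul _ _ _ fun l hl => ?_
      have hlm : l ≤ m := Nat.lt_succ_iff.1 (mem_range.1 hl)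
      rw [← mul_sub, abs_mul]
      exact mul_le_mul (hco l hlm) (abs_add_pow_sub_pow_le hlm u v) (abs_nonneg _) hC
    _ = (m + 1) * (2 * C) * (1 + |v| + |u|) ^ m := by
      rw [card_range, nsmul_eq_mul]; push_cast; ring

lemma exists_mul_pow_le_mul_pow_succ_add (m : ℕ) (M : ℝ) {δ : ℝ} (hδ : 0 < δ) :
    ∃ D, 0 ≤ D ∧ ∀ x, 0 ≤ x → M * x ^ m ≤ δ * x ^ (m + 1) + D := by
  refine ⟨|M| * (|M| / δ) ^ m, by positivity, fun x hx => ?_⟩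
  have hM : M * x ^ m ≤ |M| * x ^ m :=
    mul_le_mul_of_nonneg_right (le_abs_self M) (by positivity)
  rcases le_total x (|M| / δ) with hsmall | hlarge
  · have : |M| * x ^ m ≤ |M| * (|M| / δ) ^ m :=
      mul_le_mul_of_nonneg_left (pow_le_pow_left₀ hx hsmall m) (abs_nonneg M)
    have : 0 ≤ δ * x ^ (m + 1) := by positivity
    linarith
  · have hMx : |M| ≤ δ * x := (div_le_iff₀' hδ).1 hlarge
    have : |M| * x ^ m ≤ δ * x ^ (m + 1) := by
      rw [pow_succ, ← mul_assoc, mul_right_comm]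
      exact mul_le_mul_of_nonneg_right hMx (by positivity)
    have : 0 ≤ |M| * (|M| / δ) ^ m := by positivity
    linarith

lemma exists_mul_add_pow_le_add_pow_add (m : ℕ) (M : ℝ) {δ : ℝ} (hδ : 0 < δ) :
    ∃ D, 0 ≤ D ∧ ∀ p q : ℝ, 0 ≤ p → 0 ≤ q →
      M * (p + q) ^ m ≤ δ * (p ^ (m + 1) + q ^ (m + 1)) + D := by
  obtain ⟨D, hD, hyoung⟩ := exists_mul_pow_le_mul_pow_succ_add m M (δ := δ / 2 ^ m) (by positivity)
  refine ⟨D, hD, fun p q hp hq => ?_⟩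
  calc M * (p + q) ^ m ≤ δ / 2 ^ m * (p + q) ^ (m + 1) + D := hyoung _ (by positivity)
    _ ≤ δ / 2 ^ m * (2 ^ m * (p ^ (m + 1) + q ^ (m + 1))) + D := by
      gcongr
      simpa using add_pow_le hp hq (m + 1)
    _ = δ * (p ^ (m + 1) + q ^ (m + 1)) + D := by field_simp

theorem polynomial_dissipativity_estimate_general
    (k : ℕ) (c C : ℝ) (hc : 0 < c) :
    ∃ a'' b'' : ℝ, 0 < a'' ∧ 0 < b'' ∧
      ∀ (a : ℝ) (co : ℕ → ℝ), c ≤ a → (∀ l, l ≤ 2 * k → |co l| ≤ C) →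
        ∀ u v : ℝ,
          ((fun η : ℝ => -a * η ^ (2 * k + 1)
              + ∑ l ∈ Finset.range (2 * k + 1), co l * η ^ l) (u + v)
            - (fun η : ℝ => -a * η ^ (2 * k + 1)
              + ∑ l ∈ Finset.range (2 * k + 1), co l * η ^ l) v) * Real.sign u
          ≤ a'' * (1 + |v|) ^ (2 * k + 1) - b'' * |u| ^ (2 * k + 1) := by
  set b := c / 2 ^ (2 * k + 2)
  obtain ⟨D, hD, habsorb⟩ :=
    exists_mul_add_pow_le_add_pow_add (2 * k) ((2 * k + 1) * (2 * C)) (δ := b) (by positivity)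
  refine ⟨c + b + D, b, by positivity, by positivity, fun a co hca hco u v => ?_⟩
  have hlead := (odd_two_mul_add_one k).neg_mul_add_pow_sub_pow_mul_sign_le hc.le hca u v
  have hlow := (mul_sign_le_abs _ u).trans (abs_sum_mul_add_pow_sub_sum_mul_pow_le hco u v)
  push_cast at hlow
  have hgood : c * (|u| / 2) ^ (2 * k + 1) = 2 * b * |u| ^ (2 * k + 1) := by
    simp only [b, div_pow, pow_succ]; field_simp
  have hv : c * |v| ^ (2 * k + 1) ≤ c * (1 + |v|) ^ (2 * k + 1) := by
    gcongr; linarith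
  have hD' : D ≤ D * (1 + |v|) ^ (2 * k + 1) :=
    le_mul_of_one_le_right hD (one_le_pow₀ (by linarith [abs_nonneg v]))
  beta_reduce
  linarith [habsorb (1 + |v|) |u| (by positivity) (abs_nonneg u)]

/-- One-dimensional dissipativity estimate for an odd-degree polynomial
`f(η) = -a η^{2k+1} + ∑_{l=0}^{2k} a_l η^l` with leading coefficient `-a`, `a ≥ c > 0`,
and `|a_l| ≤ C`: there are constants `a'', b'' > 0` depending only on `c`, `C`, `k` with
`(f(u+v) - f(v)) · sgn(u) ≤ a''(1+|v|)^{2k+1} - b''|u|^{2k+1}` for all `u, v ∈ ℝ`. -/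
theorem polynomial_dissipativity_estimate
    (k : ℕ) (c C : ℝ) (hc : 0 < c) (hC : 0 ≤ C) :
    ∃ a'' b'' : ℝ, 0 < a'' ∧ 0 < b'' ∧
      ∀ (a : ℝ) (co : ℕ → ℝ), c ≤ a → (∀ l, l ≤ 2 * k → |co l| ≤ C) →
        ∀ u v : ℝ,
          ((fun η : ℝ => -a * η ^ (2 * k + 1)
              + ∑ l ∈ Finset.range (2 * k + 1), co l * η ^ l) (u + v)
            - (fun η : ℝ => -a * η ^ (2 * k + 1)
              + ∑ l ∈ Finset.range (2 * k + 1), co l * η ^ l) v) * Real.sign u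
          ≤ a'' * (1 + |v|) ^ (2 * k + 1) - b'' * |u| ^ (2 * k + 1) :=
  polynomial_dissipativity_estimate_general k c C hc
end
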